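/- arXiv:2205.10524 — 10 statements merged into one kernel-verified Lean document; each statement's English description precedes it below -/
import Mathlib

section
/- For probability measures P, Q with densities p, q with respect to a σ-finite measure μ, and any probability measure S, the quantity E_S[t] where t(x) = 1_{q(x)>p(x)} - P({q>p}) satisfies: d_TV(P,Q) - d_TV(S,Q) ≤ E_S[t] ≤ d_TV(S,P), where d_TV denotes the total variation distance. -/
/-!
Put `B = {p < q}`. Splitting any measurable `C` along `B` shows that `Q C - P C ≤ Q B - P B`,
since `q ≤ p` on `C \ B` and `p < q` on `B \ C`; applied to complements this gives
Scheffé's identity `d_TV(P, Q) = Q B - P B`. The expectation of the test statistic is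
`S B - P B`, which is at most `d_TV(S, P)` by testing the supremum at `B`, and at least
`(Q B - P B) - (Q B - S B) ≥ d_TV(P, Q) - d_TV(S, Q)` by testing `d_TV(S, Q)` at `Bᶜ`.
-/

open MeasureTheory
open scoped ENNReal

/-- Total variation distance `sup_A [P(A) - Q(A)]`. -/
noncomputable def tvDist {X : Type*} [MeasurableSpace X] (P Q : Measure X) : ℝ :=
  ⨆ A : {s : Set X // MeasurableSet s}, ((P A).toReal - (Q A).toReal)

namespace MeasureTheory

variable {X : Type*} [MeasurableSpace X]

section tvDist

variable {P Q : Measure X}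

lemma measureReal_sub_le_tvDist [IsFiniteMeasure P] {A : Set X} (hA : MeasurableSet A) :
    P.real A - Q.real A ≤ tvDist P Q := by
  refine le_ciSup (f := fun A : {s : Set X // MeasurableSet s} => P.real A - Q.real A)
    ⟨P.real Set.univ, ?_⟩ ⟨A, hA⟩
  rintro _ ⟨A, rfl⟩
  have := measureReal_mono (μ := P) (Set.subset_univ A.1)
  have := measureReal_nonneg (μ := Q) (s := A.1)
  dsimp only
  linarith

lemma tvDist_le {c : ℝ} (h : ∀ A, MeasurableSet A → P.real A - Q.real A ≤ c) :
    tvDist P Q ≤ c :=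
  have : Nonempty {s : Set X // MeasurableSet s} := ⟨⟨∅, MeasurableSet.empty⟩⟩
  ciSup_le fun A => h A A.2

lemma measureReal_compl_sub_measureReal_compl [IsProbabilityMeasure P] [IsProbabilityMeasure Q]
    {A : Set X} (hA : MeasurableSet A) :
    P.real Aᶜ - Q.real Aᶜ = Q.real A - P.real A := by
  rw [probReal_compl_eq_one_sub hA, probReal_compl_eq_one_sub hA]
  ring

lemma measureReal_sub_le_of_sdiff [IsFiniteMeasure P] [IsFiniteMeasure Q] {B C : Set X}
    (hB : MeasurableSet B) (hC : MeasurableSet C)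
    (hCB : Q.real (C \ B) ≤ P.real (C \ B)) (hBC : P.real (B \ C) ≤ Q.real (B \ C)) :
    Q.real C - P.real C ≤ Q.real B - P.real B := by
  rw [← measureReal_inter_add_sdiff (μ := Q) hB, ← measureReal_inter_add_sdiff (μ := P) hB,
    ← measureReal_inter_add_sdiff (μ := Q) hC (s := B),
    ← measureReal_inter_add_sdiff (μ := P) hC (s := B), Set.inter_comm B C]
  linarith

end tvDist

lemma withDensity_apply_le_of_le_on (μ : Measure X) {f g : X → ℝ≥0∞} {s : Set X}
    (hs : MeasurableSet s) (hfg : ∀ x ∈ s, f x ≤ g x) :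
    μ.withDensity f s ≤ μ.withDensity g s := by
  rw [withDensity_apply _ hs, withDensity_apply _ hs]
  exact setLIntegral_mono' hs hfg

lemma withDensity_real_sub_le_setOf_lt (μ : Measure X) {p q : X → ℝ≥0∞}
    (hp : Measurable p) (hq : Measurable q)
    [IsFiniteMeasure (μ.withDensity p)] [IsFiniteMeasure (μ.withDensity q)]
    {C : Set X} (hC : MeasurableSet C) :
    (μ.withDensity q).real C - (μ.withDensity p).real C ≤
      (μ.withDensity q).real {y | p y < q y} - (μ.withDensity p).real {y | p y < q y} := by
  have hB : MeasurableSet {y | p y < q y} := measurableSet_lt hp hq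
  refine measureReal_sub_le_of_sdiff hB hC ?_ ?_
  · exact ENNReal.toReal_mono (by finiteness) <|
      withDensity_apply_le_of_le_on μ (hC.diff hB) fun x hx => not_lt.mp hx.2
  · exact ENNReal.toReal_mono (by finiteness) <|
      withDensity_apply_le_of_le_on μ (hB.diff hC) fun x hx => hx.1.le

/-- Scheffé's identity: the total variation distance is attained at `{p < q}`. -/
lemma tvDist_withDensity_eq (μ : Measure X) {p q : X → ℝ≥0∞}
    (hp : Measurable p) (hq : Measurable q)
    [IsProbabilityMeasure (μ.withDensity p)] [IsProbabilityMeasure (μ.withDensity q)] :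
    tvDist (μ.withDensity p) (μ.withDensity q) =
      (μ.withDensity q).real {y | p y < q y} - (μ.withDensity p).real {y | p y < q y} := by
  have hB : MeasurableSet {y | p y < q y} := measurableSet_lt hp hq
  refine le_antisymm (tvDist_le fun A hA => ?_) ?_
  · rw [← measureReal_compl_sub_measureReal_compl hA]
    exact withDensity_real_sub_le_setOf_lt μ hp hq hA.compl
  · rw [← measureReal_compl_sub_measureReal_compl hB]
    exact measureReal_sub_le_tvDist hB.compl

lemma integral_indicator_one_sub_const (S : Measure X) [IsProbabilityMeasure S]
    {B : Set X} (hB : MeasurableSet B) (c : ℝ) :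
    ∫ x, (B.indicator (fun _ => (1 : ℝ)) x - c) ∂S = S.real B - c := by
  rw [integral_sub ((integrable_const 1).indicator hB) (integrable_const c),
    integral_indicator_const _ hB, integral_const, probReal_univ, smul_eq_mul, smul_eq_mul,
    mul_one, one_mul]

end MeasureTheory

theorem stmt0_general {X : Type*} [MeasurableSpace X] (μ : Measure X)
    (p q : X → ℝ≥0∞) (hp : Measurable p) (hq : Measurable q)
    (S : Measure X)
    [IsProbabilityMeasure (μ.withDensity p)]
    [IsProbabilityMeasure (μ.withDensity q)]
    [IsProbabilityMeasure S] :
    tvDist (μ.withDensity p) (μ.withDensity q) - tvDist S (μ.withDensity q) ≤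
        ∫ x, (Set.indicator {y | p y < q y} (fun _ => (1 : ℝ)) x
          - ((μ.withDensity p) {y | p y < q y}).toReal) ∂S ∧
      ∫ x, (Set.indicator {y | p y < q y} (fun _ => (1 : ℝ)) x
          - ((μ.withDensity p) {y | p y < q y}).toReal) ∂S ≤ tvDist S (μ.withDensity p) := by
  have hB : MeasurableSet {y | p y < q y} := measurableSet_lt hp hq
  simp only [← measureReal_def, integral_indicator_one_sub_const S hB]
  constructor
  · have hS := measureReal_sub_le_tvDist (P := S) (Q := μ.withDensity q) hB.compl
    rw [measureReal_compl_sub_measureReal_compl hB] at hS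
    rw [tvDist_withDensity_eq μ hp hq]
    linarith
  · exact measureReal_sub_le_tvDist hB

theorem stmt0 {X : Type*} [MeasurableSpace X] (μ : Measure X) [SigmaFinite μ]
    (p q : X → ℝ≥0∞) (hp : Measurable p) (hq : Measurable q)
    (S : Measure X)
    [IsProbabilityMeasure (μ.withDensity p)]
    [IsProbabilityMeasure (μ.withDensity q)]
    [IsProbabilityMeasure S] :
    tvDist (μ.withDensity p) (μ.withDensity q) - tvDist S (μ.withDensity q) ≤
        ∫ x, (Set.indicator {y | p y < q y} (fun _ => (1 : ℝ)) x
          - ((μ.withDensity p) {y | p y < q y}).toReal) ∂S ∧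
      ∫ x, (Set.indicator {y | p y < q y} (fun _ => (1 : ℝ)) x
          - ((μ.withDensity p) {y | p y < q y}).toReal) ∂S ≤ tvDist S (μ.withDensity p) :=
  stmt0_general μ p q hp hq S
end

section
/- Let p be a nonincreasing probability density on (a, +∞), let B > 0 and let I ⊂ ℝ be a measurable set on which p is not a.e. equal to 0. Then the density q = (min(p, B)·1_I)/(∫_I min(p,B) dμ) satisfies ‖p - q‖_{L¹} ≤ 2[∫_I max(p - B, 0) dμ + ∫_{I^c} p dμ]. -/
open MeasureTheory

theorem stmt6 (a : ℝ) (p : ℝ → ℝ) (hm : Measurable p) (h0 : ∀ x, 0 ≤ p x)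
    (hsupp : ∀ x ≤ a, p x = 0) (hanti : AntitoneOn p (Set.Ioi a))
    (hdens : ∫ x, p x = 1)
    (B : ℝ) (hB : 0 < B) (I : Set ℝ) (hI : MeasurableSet I)
    (hne : ¬ (∀ᵐ x ∂(volume.restrict I), p x = 0)) :
    ∫ x, |p x - (min (p x) B * Set.indicator I (fun _ => (1 : ℝ)) x)
          / ∫ y in I, min (p y) B|
      ≤ 2 * ((∫ x in I, max (p x - B) 0) + ∫ x in Iᶜ, p x) := by
  have hint : Integrable p := by
    by_contra h
    rw [integral_undef h] at hdens
    norm_num at hdens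
  set g : ℝ → ℝ := I.indicator (fun x => min (p x) B) with hgdef
  have hgmeas : Measurable g := (hm.min measurable_const).indicator hI
  have hg0 : ∀ x, 0 ≤ g x := fun x =>
    Set.indicator_nonneg (fun y _ => le_min (h0 y) hB.le) x
  have hgle : ∀ x, g x ≤ p x := by
    intro x
    by_cases hx : x ∈ I <;> simp [hgdef, Set.indicator, hx, min_le_left, h0 x]
  have hg : Integrable g := hint.mono hgmeas.aestronglyMeasurable
    (Filter.Eventually.of_forall fun x => by
      rw [Real.norm_eq_abs, Real.norm_eq_abs, abs_of_nonneg (hg0 x), abs_of_nonneg (h0 x)]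
      exact hgle x)
  set c : ℝ := ∫ y in I, min (p y) B with hcdef
  have hcg : ∫ x, g x = c := by rw [hgdef, integral_indicator hI]
  have hminint : IntegrableOn (fun x => min (p x) B) I :=
    (integrable_indicator_iff hI).mp hg
  have hc0 : 0 < c := by
    rcases lt_or_eq_of_le (setIntegral_nonneg hI fun x _ => le_min (h0 x) hB.le) with h | h
    · exact h
    · exfalso
      apply hne
      have := (integral_eq_zero_iff_of_nonneg_ae
        (Filter.Eventually.of_forall fun x => le_min (h0 x) hB.le) hminint).mp h.symm
      filter_upwards [this] with x hx
      rcases le_or_gt (p x) B with h' | h'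
      · simpa [min_eq_left h'] using hx
      · simp only [Pi.zero_apply, min_eq_right h'.le] at hx
        linarith
  have hc1 : c ≤ 1 := by
    rw [← hcg, ← hdens]
    exact integral_mono hg hint hgle
  have hq : Integrable (fun x => g x / c) := hg.div_const c
  have hrw : ∀ x, min (p x) B * Set.indicator I (fun _ => (1 : ℝ)) x = g x := by
    intro x; by_cases hx : x ∈ I <;> simp [hgdef, Set.indicator, hx]
  simp only [hrw]
  -- pointwise bound
  have hpt : ∀ x, |p x - g x / c| ≤ (p x - g x) + g x * (1 / c - 1) := by
    intro x
    have h1 : |p x - g x| = p x - g x := abs_of_nonneg (sub_nonneg.mpr (hgle x))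
    have h2 : |g x - g x / c| = g x * (1 / c - 1) := by
      have : g x - g x / c = -(g x * (1 / c - 1)) := by field_simp; ring
      rw [this, abs_neg, abs_of_nonneg]
      apply mul_nonneg (hg0 x)
      have : (1 : ℝ) ≤ 1 / c := (le_div_iff₀ hc0).mpr (by linarith)
      linarith
    calc |p x - g x / c| ≤ |p x - g x| + |g x - g x / c| := by
          have := abs_sub_abs_le_abs_sub (p x - g x / c) (g x - g x / c)
          calc |p x - g x / c| = |(p x - g x) + (g x - g x / c)| := by ring_nf
            _ ≤ |p x - g x| + |g x - g x / c| := abs_add_le _ _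
      _ = (p x - g x) + g x * (1 / c - 1) := by rw [h1, h2]
  have hbound : ∫ x, |p x - g x / c| ≤ 2 * (1 - c) := by
    have hrhs : Integrable (fun x => (p x - g x) + g x * (1 / c - 1)) :=
      (hint.sub hg).add (hg.mul_const _)
    calc ∫ x, |p x - g x / c|
        ≤ ∫ x, ((p x - g x) + g x * (1 / c - 1)) :=
          integral_mono (hint.sub hq).abs hrhs hpt
      _ = (∫ x, (p x - g x)) + ∫ x, g x * (1 / c - 1) :=
          integral_add (hint.sub hg) (hg.mul_const _)
      _ = (1 - c) + c * (1 / c - 1) := by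
          rw [integral_sub hint hg, hdens, hcg, integral_mul_const, hcg]
      _ = 2 * (1 - c) := by field_simp; ring
  -- the RHS identity
  have hmax : ∀ x, max (p x - B) 0 = p x - min (p x) B := by
    intro x
    rcases le_total (p x) B with h | h
    · simp [min_eq_left h, max_eq_right (sub_nonpos.mpr h)]
    · simp [min_eq_right h, max_eq_left (sub_nonneg.mpr h)]
  have hId : (∫ x in I, max (p x - B) 0) + ∫ x in Iᶜ, p x = 1 - c := by
    have h1 : ∫ x in I, max (p x - B) 0 = (∫ x in I, p x) - c := by
      simp only [hmax]
      rw [integral_sub hint.integrableOn hminint]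
    have h2 : (∫ x in I, p x) + ∫ x in Iᶜ, p x = 1 := by
      rw [integral_add_compl hI hint, hdens]
    linarith
  rw [hId]
  exact hbound
end

section
/- Let f be a convex (or concave) continuous function on a nontrivial bounded interval [a,b] admitting a right derivative f'_r(a) at a and a left derivative f'_l(b) at b, and let ℓ_f be the affine function with ℓ_f(a) = f(a), ℓ_f(b) = f(b). Then ∫_a^b |f - ℓ_f| dμ ≤ ((b-a)²/8)·|f'_r(a) - f'_l(b)|. -/
/-!
A convex `f` lies below its chord `ℓ_f` and above its two tangent lines at the endpoints, so
`ℓ_f - f` is a nonnegative function bounded by `(s - f'_r(a)) (x - a)` and by `(f'_l(b) - s) (b - x)`,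
where `s` is the slope of the chord. Integrating the first bound over the left half of `[a, b]` and
the second over the right half gives `(b - a)² / 8 · (f'_l(b) - f'_r(a))`. The concave case follows
by applying this to `-f`.
-/

open Set intervalIntegral MeasureTheory

noncomputable def chord (f : ℝ → ℝ) (a b x : ℝ) : ℝ :=
  f a + (f b - f a) / (b - a) * (x - a)

lemma chord_neg (f : ℝ → ℝ) (a b x : ℝ) : chord (-f) a b x = -chord f a b x := by
  simp only [chord, Pi.neg_apply]
  ring

lemma chord_eq_sub_mul (f : ℝ → ℝ) {a b : ℝ} (hab : a ≠ b) (x : ℝ) :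
    chord f a b x = f b - (f b - f a) / (b - a) * (b - x) := by
  have : b - a ≠ 0 := sub_ne_zero.2 hab.symm
  unfold chord
  field_simp
  ring

lemma integral_le_of_le_tent {g : ℝ → ℝ} {a b p q : ℝ} (hab : a ≤ b)
    (hg : IntervalIntegrable g volume a b)
    (hp : ∀ x ∈ Icc a b, g x ≤ p * (x - a)) (hq : ∀ x ∈ Icc a b, g x ≤ q * (b - x)) :
    ∫ x in a..b, g x ≤ (b - a) ^ 2 / 8 * (p + q) := by
  set m := (a + b) / 2 with hm
  have ham : a ≤ m := by linarith
  have hmb : m ≤ b := by linarith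
  have hg_am : IntervalIntegrable g volume a m :=
    hg.mono_set (uIcc_subset_uIcc_left (by rw [uIcc_of_le hab]; exact ⟨ham, hmb⟩))
  have hg_mb : IntervalIntegrable g volume m b :=
    hg.mono_set (uIcc_subset_uIcc_right (by rw [uIcc_of_le hab]; exact ⟨ham, hmb⟩))
  have hleft : ∫ x in a..m, g x ≤ p * ((b - a) ^ 2 / 8) := by
    calc ∫ x in a..m, g x ≤ ∫ x in a..m, p * (x - a) :=
          integral_mono_on ham hg_am ((by fun_prop : Continuous _).intervalIntegrable _ _)
            fun x hx => hp x ⟨hx.1, hx.2.trans hmb⟩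
      _ = p * ((b - a) ^ 2 / 8) := by
          simp only [intervalIntegral.integral_const_mul, integral_comp_sub_right fun x => x,
            integral_id]
          ring
  have hright : ∫ x in m..b, g x ≤ q * ((b - a) ^ 2 / 8) := by
    calc ∫ x in m..b, g x ≤ ∫ x in m..b, q * (b - x) :=
          integral_mono_on hmb hg_mb ((by fun_prop : Continuous _).intervalIntegrable _ _)
            fun x hx => hq x ⟨ham.trans hx.1, hx.2⟩
      _ = q * ((b - a) ^ 2 / 8) := by
          simp only [intervalIntegral.integral_const_mul, integral_comp_sub_left fun x => x,
            integral_id]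
          ring
  calc ∫ x in a..b, g x = (∫ x in a..m, g x) + ∫ x in m..b, g x :=
        (integral_add_adjacent_intervals hg_am hg_mb).symm
    _ ≤ (b - a) ^ 2 / 8 * (p + q) := by linarith

namespace ConvexOn

variable {f : ℝ → ℝ} {a b x : ℝ}

lemma le_chord (hf : ConvexOn ℝ (Icc a b) f) (hx : x ∈ Icc a b) : f x ≤ chord f a b x := by
  obtain rfl | hax := hx.1.eq_or_lt
  · simp [chord]
  have hab : a < b := hax.trans_le hx.2
  have hslope : (f x - f a) / (x - a) ≤ (f b - f a) / (b - a) :=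
    hf.secant_mono (left_mem_Icc.2 hab.le) hx (right_mem_Icc.2 hab.le) hax.ne' hab.ne' hx.2
  rw [div_le_iff₀ (sub_pos.2 hax)] at hslope
  unfold chord
  linarith

lemma chord_sub_le_of_hasDerivWithinAt_Ici {fa' : ℝ} (hf : ConvexOn ℝ (Icc a b) f)
    (ha : HasDerivWithinAt f fa' (Ici a) a) (hx : x ∈ Icc a b) :
    chord f a b x - f x ≤ ((f b - f a) / (b - a) - fa') * (x - a) := by
  obtain rfl | hax := hx.1.eq_or_lt
  · simp [chord]
  have hab : a < b := hax.trans_le hx.2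
  have htangent : fa' ≤ slope f a x :=
    hf.le_slope_of_hasDerivWithinAt (left_mem_Icc.2 hab.le) hx hax (ha.mono Icc_subset_Ici_self)
  rw [slope_def_field, le_div_iff₀ (sub_pos.2 hax)] at htangent
  unfold chord
  linarith

lemma chord_sub_le_of_hasDerivWithinAt_Iic {fb' : ℝ} (hf : ConvexOn ℝ (Icc a b) f)
    (hb : HasDerivWithinAt f fb' (Iic b) b) (hx : x ∈ Icc a b) :
    chord f a b x - f x ≤ (fb' - (f b - f a) / (b - a)) * (b - x) := by
  obtain rfl | hxb := hx.2.eq_or_lt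
  · obtain rfl | hab := hx.1.eq_or_lt
    · simp [chord]
    · simp [chord_eq_sub_mul f hab.ne]
  have hab : a < b := hx.1.trans_lt hxb
  have htangent : slope f x b ≤ fb' :=
    hf.slope_le_of_hasDerivWithinAt hx (right_mem_Icc.2 hab.le) hxb (hb.mono Icc_subset_Iic_self)
  rw [slope_def_field, div_le_iff₀ (sub_pos.2 hxb)] at htangent
  rw [chord_eq_sub_mul f hab.ne]
  linarith

theorem integral_abs_sub_chord_le {fa' fb' : ℝ} (hf : ConvexOn ℝ (Icc a b) f)
    (hcont : ContinuousOn f (Icc a b)) (hab : a ≤ b)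
    (ha : HasDerivWithinAt f fa' (Ici a) a) (hb : HasDerivWithinAt f fb' (Iic b) b) :
    ∫ x in a..b, |f x - chord f a b x| ≤ (b - a) ^ 2 / 8 * |fa' - fb'| := by
  have habs : ∀ x ∈ Icc a b, |f x - chord f a b x| = chord f a b x - f x := fun x hx => by
    rw [abs_of_nonpos (sub_nonpos.2 (hf.le_chord hx)), neg_sub]
  have hint : IntervalIntegrable (fun x => |f x - chord f a b x|) volume a b :=
    (hcont.sub (by unfold chord; fun_prop)).abs.intervalIntegrable_of_Icc hab
  calc ∫ x in a..b, |f x - chord f a b x|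
      ≤ (b - a) ^ 2 / 8 * (((f b - f a) / (b - a) - fa') + (fb' - (f b - f a) / (b - a))) :=
        integral_le_of_le_tent hab hint
          (fun x hx => (habs x hx).trans_le (hf.chord_sub_le_of_hasDerivWithinAt_Ici ha hx))
          (fun x hx => (habs x hx).trans_le (hf.chord_sub_le_of_hasDerivWithinAt_Iic hb hx))
    _ = (b - a) ^ 2 / 8 * (fb' - fa') := by ring
    _ ≤ (b - a) ^ 2 / 8 * |fa' - fb'| := by
        gcongr
        rw [abs_sub_comm]
        exact le_abs_self _

end ConvexOn

theorem ConcaveOn.integral_abs_sub_chord_le {f : ℝ → ℝ} {a b fa' fb' : ℝ}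
    (hf : ConcaveOn ℝ (Icc a b) f) (hcont : ContinuousOn f (Icc a b)) (hab : a ≤ b)
    (ha : HasDerivWithinAt f fa' (Ici a) a) (hb : HasDerivWithinAt f fb' (Iic b) b) :
    ∫ x in a..b, |f x - chord f a b x| ≤ (b - a) ^ 2 / 8 * |fa' - fb'| := by
  have h := hf.neg.integral_abs_sub_chord_le hcont.neg hab ha.neg hb.neg
  simpa only [chord_neg, Pi.neg_apply, neg_sub_neg, abs_sub_comm] using h

theorem stmt7 (a b : ℝ) (hab : a < b) (f : ℝ → ℝ)
    (hcont : ContinuousOn f (Set.Icc a b))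
    (hcc : ConvexOn ℝ (Set.Icc a b) f ∨ ConcaveOn ℝ (Set.Icc a b) f)
    (fa' fb' : ℝ)
    (ha : HasDerivWithinAt f fa' (Set.Ici a) a)
    (hb : HasDerivWithinAt f fb' (Set.Iic b) b) :
    ∫ x in a..b, |f x - (f a + (f b - f a) / (b - a) * (x - a))|
      ≤ (b - a) ^ 2 / 8 * |fa' - fb'| := by
  rcases hcc with hconvex | hconcave
  · exact hconvex.integral_abs_sub_chord_le hcont hab.le ha hb
  · exact hconcave.integral_abs_sub_chord_le hcont hab.le ha hb
end

section
/- Let f be a concave function on [0,1] with f(0) = 0 and f(1) = 1, admitting a right derivative at 0 and a left derivative at 1. Then ∫_0^1 |f - id| dμ ≤ (1/2)·((f'_r(0) - 1)(1 - f'_l(1)))/(f'_r(0) - f'_l(1)), with the convention 0/0 = 1 when f is affine. -/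
/-!
A concave `f` with `f 0 = 0` and `f 1 = 1` lies above its chord `id` and below its one-sided
tangent lines `d₀ x` at `0` and `1 + d₁ (x - 1)` at `1`. Hence `0 ≤ f x - x` is bounded by the
tent `min ((d₀ - 1) x) ((1 - d₁) (1 - x))`, a triangle over `[0, 1]` whose apex sits where the
two tangents meet; its area is the right-hand side.
-/

open Set MeasureTheory intervalIntegral

namespace ConcaveOn

variable {S : Set ℝ} {f : ℝ → ℝ} {x y f' : ℝ}

lemma le_add_mul_sub_of_hasDerivWithinAt_Ici (hf : ConcaveOn ℝ S f) (hx : x ∈ S) (hy : y ∈ S)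
    (hxy : x ≤ y) (hf' : HasDerivWithinAt f f' (Ici x) x) : f y ≤ f x + f' * (y - x) := by
  rcases hxy.eq_or_lt with rfl | hxy
  · simp
  have hslope := hf.slope_le_of_hasDerivWithinAt_Ioi hx hy hxy (hf'.mono Ioi_subset_Ici_self)
  rw [slope_def_field, div_le_iff₀ (sub_pos.2 hxy)] at hslope
  linarith

lemma le_add_mul_sub_of_hasDerivWithinAt_Iic (hf : ConcaveOn ℝ S f) (hx : x ∈ S) (hy : y ∈ S)
    (hxy : x ≤ y) (hf' : HasDerivWithinAt f f' (Iic y) y) : f x ≤ f y + f' * (x - y) := by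
  rcases hxy.eq_or_lt with rfl | hxy
  · simp
  have hslope := hf.le_slope_of_hasDerivWithinAt_Iio hx hy hxy (hf'.mono Iio_subset_Iic_self)
  rw [slope_def_field, le_div_iff₀ (sub_pos.2 hxy)] at hslope
  linarith

end ConcaveOn

lemma integral_min_mul_mul_one_sub {a b : ℝ} (ha : 0 ≤ a) (hb : 0 ≤ b) :
    ∫ x in (0:ℝ)..1, min (a * x) (b * (1 - x)) = 1 / 2 * (a * b / (a + b)) := by
  rcases (add_nonneg ha hb).eq_or_lt with hab | hab
  · obtain ⟨rfl, rfl⟩ : a = 0 ∧ b = 0 := ⟨by linarith, by linarith⟩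
    simp
  set c := b / (a + b) with hc
  have hc0 : 0 ≤ c := by positivity
  have hc1 : c ≤ 1 := div_le_one_of_le₀ (by linarith) hab.le
  have hint (u v : ℝ) : IntervalIntegrable (fun x => min (a * x) (b * (1 - x))) volume u v :=
    (by fun_prop : Continuous fun x : ℝ => min (a * x) (b * (1 - x))).intervalIntegrable u v
  -- the two sides of the tent cross at `c`
  have hdiff (x : ℝ) : a * x - b * (1 - x) = (a + b) * (x - c) := by
    rw [hc]; field_simp; ring
  have hleft : ∫ x in (0:ℝ)..c, min (a * x) (b * (1 - x)) = ∫ x in (0:ℝ)..c, a * x := by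
    refine integral_congr fun x hx => min_eq_left ?_
    rw [uIcc_of_le hc0] at hx
    nlinarith [hdiff x, hx.2]
  have hright : ∫ x in c..1, min (a * x) (b * (1 - x)) = ∫ x in c..1, b * (1 - x) := by
    refine integral_congr fun x hx => min_eq_right ?_
    rw [uIcc_of_le hc1] at hx
    nlinarith [hdiff x, hx.1]
  rw [← integral_add_adjacent_intervals (hint 0 c) (hint c 1), hleft, hright,
    intervalIntegral.integral_const_mul, intervalIntegral.integral_const_mul, integral_id,
    integral_sub intervalIntegrable_const intervalIntegrable_id, intervalIntegral.integral_const, integral_id, smul_eq_mul, hc]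
  field_simp
  ring

theorem stmt9_general (f : ℝ → ℝ)
    (hconc : ConcaveOn ℝ (Set.Icc 0 1) f)
    (h0 : f 0 = 0) (h1 : f 1 = 1)
    (d0 d1 : ℝ)
    (hd0 : HasDerivWithinAt f d0 (Set.Ici 0) 0)
    (hd1 : HasDerivWithinAt f d1 (Set.Iic 1) 1) :
    ∫ x in (0:ℝ)..1, |f x - x| ≤ (1 / 2) * ((d0 - 1) * (1 - d1) / (d0 - d1)) := by
  have h0m : (0:ℝ) ∈ Icc (0:ℝ) 1 := left_mem_Icc.2 zero_le_one
  have h1m : (1:ℝ) ∈ Icc (0:ℝ) 1 := right_mem_Icc.2 zero_le_one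
  have htan0 (x) (hx : x ∈ Icc (0:ℝ) 1) : f x ≤ d0 * x := by
    simpa [h0] using hconc.le_add_mul_sub_of_hasDerivWithinAt_Ici h0m hx hx.1 hd0
  have htan1 (x) (hx : x ∈ Icc (0:ℝ) 1) : f x ≤ 1 + d1 * (x - 1) := by
    simpa [h1] using hconc.le_add_mul_sub_of_hasDerivWithinAt_Iic hx h1m hx.2 hd1
  have hchord (x) (hx : x ∈ Icc (0:ℝ) 1) : x ≤ f x := by
    simpa [h0, h1] using hconc.2 h0m h1m (sub_nonneg.2 hx.2) hx.1 (sub_add_cancel 1 x)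
  have ha : 0 ≤ d0 - 1 := by linarith [htan0 1 h1m]
  have hb : 0 ≤ 1 - d1 := by linarith [htan1 0 h0m]
  have htent : ∀ x ∈ Ioc (0:ℝ) 1, |f x - x| ≤ min ((d0 - 1) * x) ((1 - d1) * (1 - x)) :=
    fun x hx => by
      have hx' := Ioc_subset_Icc_self hx
      rw [abs_of_nonneg (sub_nonneg.2 (hchord x hx'))]
      exact le_min (by linarith [htan0 x hx']) (by linarith [htan1 x hx'])
  calc ∫ x in (0:ℝ)..1, |f x - x|
      ≤ ∫ x in (0:ℝ)..1, min ((d0 - 1) * x) ((1 - d1) * (1 - x)) := by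
        rw [integral_of_le zero_le_one, integral_of_le zero_le_one]
        refine integral_mono_of_nonneg (.of_forall fun x => abs_nonneg _) ?_
          (ae_restrict_of_forall_mem measurableSet_Ioc htent)
        exact (by fun_prop : Continuous fun x : ℝ => min ((d0 - 1) * x) ((1 - d1) * (1 - x)))
          |>.integrableOn_Icc.mono_set Ioc_subset_Icc_self
    _ = (1 / 2) * ((d0 - 1) * (1 - d1) / (d0 - d1)) := by
        rw [integral_min_mul_mul_one_sub ha hb, sub_add_sub_cancel]

theorem stmt9 (f : ℝ → ℝ)
    (hconc : ConcaveOn ℝ (Set.Icc 0 1) f)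
    (hcont : ContinuousOn f (Set.Icc 0 1))
    (h0 : f 0 = 0) (h1 : f 1 = 1)
    (d0 d1 : ℝ)
    (hd0 : HasDerivWithinAt f d0 (Set.Ici 0) 0)
    (hd1 : HasDerivWithinAt f d1 (Set.Iic 1) 1) :
    ∫ x in (0:ℝ)..1, |f x - x| ≤ (1 / 2) * ((d0 - 1) * (1 - d1) / (d0 - d1)) :=
  stmt9_general f hconc h0 h1 d0 d1 hd0 hd1
end

section
/- If F is a nondecreasing, differentiable, concave function on [0, +∞), then the map φ(u) = (F(√u) - F(0))² is concave on [0, +∞). -/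
/-!
Write `φ(u) = (F(√u) - F(0))²`. For `u > 0` the chain rule gives
`φ'(u) = 2 (F(√u) - F(0)) F'(√u) / (2√u) = s(√u) · F'(√u)` with `s(t) = (F(t) - F(0)) / t`.
By concavity both the secant slope `s` and `F'` are nonincreasing on `(0, ∞)`, and by monotonicity
both are nonnegative, so their product is nonincreasing; hence so is `φ'`, and `φ` is concave.
-/

open Set Real

lemma AntitoneOn.mul {α M₀ : Type*} [Mul M₀] [Zero M₀] [Preorder M₀] [Preorder α]
    [PosMulMono M₀] [MulPosMono M₀] {f g : α → M₀} {s : Set α} (hf : AntitoneOn f s)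
    (hg : AntitoneOn g s) (hf₀ : ∀ x ∈ s, 0 ≤ f x) (hg₀ : ∀ x ∈ s, 0 ≤ g x) :
    AntitoneOn (f * g) s :=
  fun _ ha _ hb h ↦ mul_le_mul (hf ha hb h) (hg ha hb h) (hg₀ _ hb) (hf₀ _ ha)

section

variable {F : ℝ → ℝ}

lemma hasDerivAt_sq_sub_comp_sqrt {u : ℝ} (hu : 0 < u) (hF : DifferentiableAt ℝ F √u) :
    HasDerivAt (fun u ↦ (F √u - F 0) ^ 2) (slope F 0 √u * deriv F √u) u := by
  refine (((hF.hasDerivAt.comp u (hasDerivAt_sqrt hu.ne')).sub_const (F 0)).pow 2).congr_deriv ?_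
  rw [slope_def_field, sub_zero]
  field_simp [(sqrt_pos.2 hu).ne']
  simp only [Function.comp_apply]
  ring

lemma antitoneOn_slope_mul_deriv (hmono : MonotoneOn F (Ici 0))
    (hdiff : ∀ t ∈ Ioi 0, DifferentiableAt ℝ F t) (hconc : ConcaveOn ℝ (Ici 0) F) :
    AntitoneOn (fun t ↦ slope F 0 t * deriv F t) (Ioi 0) := by
  have hslope_anti : AntitoneOn (slope F 0) (Ioi 0) :=
    (hconc.slope_anti self_mem_Ici).mono fun t ht ↦ ⟨mem_Ici.2 ht.le, ht.ne'⟩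
  have hderiv_anti : AntitoneOn (deriv F) (Ioi 0) :=
    (hconc.subset Ioi_subset_Ici_self (convex_Ioi 0)).antitoneOn_deriv hdiff
  have hslope_nonneg : ∀ t ∈ Ioi (0 : ℝ), 0 ≤ slope F 0 t := fun t ht ↦
    hmono.slope_nonneg self_mem_Ici (mem_Ici.2 ht.le)
  have hderiv_nonneg : ∀ t ∈ Ioi (0 : ℝ), 0 ≤ deriv F t := fun t ht ↦ by
    rw [← derivWithin_of_isOpen isOpen_Ioi ht]
    exact (hmono.mono Ioi_subset_Ici_self).derivWithin_nonneg
  exact hslope_anti.mul hderiv_anti hslope_nonneg hderiv_nonneg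

end

theorem stmt10 (F : ℝ → ℝ)
    (hmono : MonotoneOn F (Set.Ici 0))
    (hdiff : DifferentiableOn ℝ F (Set.Ici 0))
    (hconc : ConcaveOn ℝ (Set.Ici 0) F) :
    ConcaveOn ℝ (Set.Ici 0) (fun u => (F (Real.sqrt u) - F 0) ^ 2) := by
  have hdiffAt : ∀ t ∈ Ioi 0, DifferentiableAt ℝ F t := fun t ht ↦
    hdiff.differentiableAt (Ici_mem_nhds ht)
  have hderiv : ∀ u ∈ Ioi 0, HasDerivAt (fun u ↦ (F √u - F 0) ^ 2)
      (slope F 0 √u * deriv F √u) u := fun u hu ↦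
    hasDerivAt_sq_sub_comp_sqrt hu (hdiffAt _ (sqrt_pos.2 hu))
  have hcont : ContinuousOn (fun u ↦ (F √u - F 0) ^ 2) (Ici 0) :=
    ((hdiff.continuousOn.comp continuous_sqrt.continuousOn fun u _ ↦ sqrt_nonneg u).sub
      continuousOn_const).pow 2
  have hanti : AntitoneOn (fun u ↦ slope F 0 √u * deriv F √u) (Ioi 0) :=
    (antitoneOn_slope_mul_deriv hmono hdiffAt hconc).comp_MonotoneOn
      (fun _ _ _ _ h ↦ sqrt_le_sqrt h) fun _ hu ↦ sqrt_pos.2 hu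
  refine AntitoneOn.concaveOn_of_deriv (convex_Ici 0) hcont ?_ ?_ <;> rw [interior_Ici]
  · exact fun u hu ↦ (hderiv u hu).differentiableAt.differentiableWithinAt
  · exact hanti.congr fun u hu ↦ ((hderiv u hu).deriv).symm
end

section
/- For every integer D ≥ 1, the function F_D(u) = ((1 + √u)^{1/D} - 1)² is concave on [0, +∞). -/
/-!
For `u > 0` the derivative of `u ↦ (F √u - F 0)²` is `((F √u - F 0) / √u) · F'(√u)`. When `F` is
concave and nondecreasing, both factors are nonnegative and nonincreasing in `u` (a secant slope
from `0` and the derivative of a concave function), so the derivative is nonincreasing and the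
function is concave. Take `F x = (1 + x) ^ (1 / D)`.
-/

open Real Set

theorem ConcaveOn.concaveOn_sq_sub_apply_zero_comp_sqrt {F : ℝ → ℝ}
    (hconc : ConcaveOn ℝ (Ici 0) F) (hmono : MonotoneOn F (Ici 0))
    (hcont : ContinuousOn F (Ici 0)) (hdiff : DifferentiableOn ℝ F (Ioi 0)) :
    ConcaveOn ℝ (Ici 0) (fun u => (F √u - F 0) ^ 2) := by
  have hderiv : ∀ u ∈ Ioi (0 : ℝ),
      HasDerivAt (fun u => (F √u - F 0) ^ 2) (slope F 0 √u * deriv F √u) u := by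
    intro u (hu : 0 < u)
    have hs : 0 < √u := sqrt_pos.mpr hu
    have hF : HasDerivAt F (deriv F √u) √u :=
      (hdiff.differentiableAt (Ioi_mem_nhds hs)).hasDerivAt
    refine (((hF.comp u (hasDerivAt_sqrt hu.ne')).sub_const (F 0)).pow 2).congr_deriv ?_
    rw [slope_def_field, sub_zero, Function.comp_apply]
    field_simp
    ring
  have hslope : AntitoneOn (slope F 0 ∘ sqrt) (Ioi 0) := fun u hu v hv huv =>
    hconc.slope_anti self_mem_Ici ⟨mem_Ici.mpr (sqrt_nonneg u), (sqrt_pos.mpr hu).ne'⟩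
      ⟨mem_Ici.mpr (sqrt_nonneg v), (sqrt_pos.mpr hv).ne'⟩ (sqrt_le_sqrt huv)
  have hF' : AntitoneOn (deriv F ∘ sqrt) (Ioi 0) := fun u hu v hv huv =>
    (hconc.subset Ioi_subset_Ici_self (convex_Ioi 0)).antitoneOn_deriv
      (fun x hx => hdiff.differentiableAt (Ioi_mem_nhds hx))
      (sqrt_pos.mpr hu) (sqrt_pos.mpr hv) (sqrt_le_sqrt huv)
  have hslope_nonneg : ∀ u ∈ Ioi (0 : ℝ), 0 ≤ slope F 0 √u := by
    intro u _
    rw [slope_def_field, sub_zero]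
    exact div_nonneg (sub_nonneg.mpr (hmono self_mem_Ici (sqrt_nonneg u) (sqrt_nonneg u)))
      (sqrt_nonneg u)
  have hF'_nonneg : ∀ u ∈ Ioi (0 : ℝ), 0 ≤ deriv F √u := fun u hu =>
    derivWithin_of_mem_nhds (f := F) (Ioi_mem_nhds (sqrt_pos.mpr hu)) ▸
      (hmono.mono Ioi_subset_Ici_self).derivWithin_nonneg
  refine AntitoneOn.concaveOn_of_deriv (convex_Ici 0) ?_ ?_ ?_
  · exact ((hcont.comp continuous_sqrt.continuousOn fun u _ => sqrt_nonneg u).sub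
      continuousOn_const).pow 2
  · rw [interior_Ici]
    exact fun u hu => (hderiv u hu).differentiableAt.differentiableWithinAt
  · rw [interior_Ici]
    intro u hu v hv huv
    rw [(hderiv u hu).deriv, (hderiv v hv).deriv]
    exact mul_le_mul (hslope hu hv huv) (hF' hu hv huv) (hF'_nonneg v hv) (hslope_nonneg u hu)

theorem concaveOn_one_add_rpow {p : ℝ} (hp₀ : 0 ≤ p) (hp₁ : p ≤ 1) :
    ConcaveOn ℝ (Ici 0) (fun x : ℝ => (1 + x) ^ p) :=
  ((concaveOn_rpow hp₀ hp₁).translate_right 1).subset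
    (fun x (hx : 0 ≤ x) => show (0 : ℝ) ≤ 1 + x by linarith) (convex_Ici 0)

theorem concaveOn_one_add_sqrt_rpow_sub_one_sq {p : ℝ} (hp₀ : 0 ≤ p) (hp₁ : p ≤ 1) :
    ConcaveOn ℝ (Ici 0) (fun u => ((1 + √u) ^ p - 1) ^ 2) := by
  have hmono : MonotoneOn (fun x : ℝ => (1 + x) ^ p) (Ici 0) := fun x hx y _ hxy =>
    rpow_le_rpow (by linarith [mem_Ici.mp hx]) (by linarith) hp₀
  have hcont : ContinuousOn (fun x : ℝ => (1 + x) ^ p) (Ici 0) := by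
    fun_prop (disch := exact Or.inr hp₀)
  have hdiff : DifferentiableOn ℝ (fun x : ℝ => (1 + x) ^ p) (Ioi 0) := fun x (hx : 0 < x) =>
    ((differentiableAt_id.const_add 1).rpow_const
      (Or.inl (by rw [id]; linarith))).differentiableWithinAt
  simpa using (concaveOn_one_add_rpow hp₀ hp₁).concaveOn_sq_sub_apply_zero_comp_sqrt
    hmono hcont hdiff

theorem stmt11_general (D : ℕ) :
    ConcaveOn ℝ (Set.Ici 0) (fun u => ((1 + Real.sqrt u) ^ ((D : ℝ)⁻¹) - 1) ^ 2) :=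
  concaveOn_one_add_sqrt_rpow_sub_one_sq (inv_nonneg.mpr D.cast_nonneg) (Nat.cast_inv_le_one D)

theorem stmt11 (D : ℕ) (hD : 1 ≤ D) :
    ConcaveOn ℝ (Set.Ici 0) (fun u => ((1 + Real.sqrt u) ^ ((D : ℝ)⁻¹) - 1) ^ 2) :=
  stmt11_general D
end

section
/- If f and g are two continuous, both increasing (or both decreasing) bijections from an interval I onto an interval J, then ∫_I |f - g| dμ = ∫_J |f⁻¹ - g⁻¹| dμ. -/
/-!
Both integrals are areas of regions strictly between two graphs: the left one of
`regionBetween (f ⊓ g) (f ⊔ g) I`, the right one of the same region for `f'`, `g'` over `J`.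
Since `f` and `g` are strictly monotone in the same direction, `y` lies strictly between `f x`
and `g x` iff `x` lies strictly between `f' y` and `g' y`, so the two regions are mirror images
under `(x, y) ↦ (y, x)`, which preserves Lebesgue measure on `ℝ²`.
-/

open MeasureTheory Set

section InverseOrder

variable {α β : Type*} [LinearOrder α] [LinearOrder β] {I : Set α} {J : Set β}
  {f g : α → β} {f' g' : β → α} {x : α} {y : β}

theorem StrictMonoOn.apply_lt_iff_of_invOn (hf : StrictMonoOn f I) (hinv : InvOn f' f I J)
    (hmaps : MapsTo f' J I) (hx : x ∈ I) (hy : y ∈ J) : f x < y ↔ x < f' y := by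
  conv_lhs => rw [← hinv.2 hy]
  exact hf.lt_iff_lt hx (hmaps hy)

theorem StrictMonoOn.lt_apply_iff_of_invOn (hf : StrictMonoOn f I) (hinv : InvOn f' f I J)
    (hmaps : MapsTo f' J I) (hx : x ∈ I) (hy : y ∈ J) : y < f x ↔ f' y < x := by
  conv_lhs => rw [← hinv.2 hy]
  exact hf.lt_iff_lt (hmaps hy) hx

theorem StrictAntiOn.apply_lt_iff_of_invOn (hf : StrictAntiOn f I) (hinv : InvOn f' f I J)
    (hmaps : MapsTo f' J I) (hx : x ∈ I) (hy : y ∈ J) : f x < y ↔ f' y < x := by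
  conv_lhs => rw [← hinv.2 hy]
  exact hf.lt_iff_gt hx (hmaps hy)

theorem StrictAntiOn.lt_apply_iff_of_invOn (hf : StrictAntiOn f I) (hinv : InvOn f' f I J)
    (hmaps : MapsTo f' J I) (hx : x ∈ I) (hy : y ∈ J) : y < f x ↔ x < f' y := by
  conv_lhs => rw [← hinv.2 hy]
  exact hf.lt_iff_gt (hmaps hy) hx

theorem Set.InvOn.strictMonoOn (hinv : InvOn f' f I J) (hf : StrictMonoOn f I)
    (hmaps : MapsTo f' J I) : StrictMonoOn f' J := fun a ha b hb hab => by
  rwa [← hf.apply_lt_iff_of_invOn hinv hmaps (hmaps ha) hb, hinv.2 ha]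

theorem Set.InvOn.strictAntiOn (hinv : InvOn f' f I J) (hf : StrictAntiOn f I)
    (hmaps : MapsTo f' J I) : StrictAntiOn f' J := fun a ha b hb hab => by
  rwa [← hf.apply_lt_iff_of_invOn hinv hmaps (hmaps ha) hb, hinv.2 ha]

theorem StrictMonoOn.mem_uIoo_iff_of_invOn (hf : StrictMonoOn f I) (hg : StrictMonoOn g I)
    (hf' : InvOn f' f I J) (hg' : InvOn g' g I J) (hf'maps : MapsTo f' J I)
    (hg'maps : MapsTo g' J I) (hx : x ∈ I) (hy : y ∈ J) :
    y ∈ uIoo (f x) (g x) ↔ x ∈ uIoo (f' y) (g' y) := by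
  simp only [uIoo, mem_Ioo, inf_lt_iff, lt_sup_iff, hf.apply_lt_iff_of_invOn hf' hf'maps hx hy,
    hg.apply_lt_iff_of_invOn hg' hg'maps hx hy, hf.lt_apply_iff_of_invOn hf' hf'maps hx hy,
    hg.lt_apply_iff_of_invOn hg' hg'maps hx hy]
  exact and_comm

theorem StrictAntiOn.mem_uIoo_iff_of_invOn (hf : StrictAntiOn f I) (hg : StrictAntiOn g I)
    (hf' : InvOn f' f I J) (hg' : InvOn g' g I J) (hf'maps : MapsTo f' J I)
    (hg'maps : MapsTo g' J I) (hx : x ∈ I) (hy : y ∈ J) :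
    y ∈ uIoo (f x) (g x) ↔ x ∈ uIoo (f' y) (g' y) := by
  simp only [uIoo, mem_Ioo, inf_lt_iff, lt_sup_iff, hf.apply_lt_iff_of_invOn hf' hf'maps hx hy,
    hg.apply_lt_iff_of_invOn hg' hg'maps hx hy, hf.lt_apply_iff_of_invOn hf' hf'maps hx hy,
    hg.lt_apply_iff_of_invOn hg' hg'maps hx hy]

end InverseOrder

theorem swap_preimage_regionBetween_inf_sup {I J : Set ℝ} (hI : I.OrdConnected)
    (hJ : J.OrdConnected) {f g f' g' : ℝ → ℝ} (hf : MapsTo f I J) (hg : MapsTo g I J)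
    (hf' : MapsTo f' J I) (hg' : MapsTo g' J I)
    (hbetween : ∀ x ∈ I, ∀ y ∈ J, y ∈ uIoo (f x) (g x) ↔ x ∈ uIoo (f' y) (g' y)) :
    Prod.swap ⁻¹' regionBetween (f' ⊓ g') (f' ⊔ g') J = regionBetween (f ⊓ g) (f ⊔ g) I := by
  ext ⟨x, y⟩
  change (y ∈ J ∧ x ∈ uIoo (f' y) (g' y)) ↔ (x ∈ I ∧ y ∈ uIoo (f x) (g x))
  constructor
  · rintro ⟨hy, hxy⟩
    have hx : x ∈ I := hI.uIcc_subset (hf' hy) (hg' hy) (Ioo_subset_Icc_self hxy)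
    exact ⟨hx, (hbetween x hx y hy).2 hxy⟩
  · rintro ⟨hx, hxy⟩
    have hy : y ∈ J := hJ.uIcc_subset (hf hx) (hg hx) (Ioo_subset_Icc_self hxy)
    exact ⟨hy, (hbetween x hx y hy).1 hxy⟩

theorem volume_regionBetween_inf_sup_eq_lintegral {α : Type*} [MeasurableSpace α] {μ : Measure α}
    [SFinite μ] {f g : α → ℝ} {s : Set α} (hf : AEMeasurable f (μ.restrict s))
    (hg : AEMeasurable g (μ.restrict s)) (hs : MeasurableSet s) :
    μ.prod volume (regionBetween (f ⊓ g) (f ⊔ g) s) = ∫⁻ x in s, ENNReal.ofReal |f x - g x| ∂μ := by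
  rw [volume_regionBetween_eq_lintegral (hf.inf hg) (hf.sup hg) hs]
  simp only [Pi.sub_apply, Pi.sup_apply, Pi.inf_apply, max_sub_min_eq_abs']

theorem lintegral_abs_sub_eq_of_mem_uIoo_iff {I J : Set ℝ} (hI : I.OrdConnected)
    (hJ : J.OrdConnected) {f g f' g' : ℝ → ℝ} (hf : MapsTo f I J) (hg : MapsTo g I J)
    (hf' : MapsTo f' J I) (hg' : MapsTo g' J I)
    (hfm : AEMeasurable f (volume.restrict I)) (hgm : AEMeasurable g (volume.restrict I))
    (hf'm : AEMeasurable f' (volume.restrict J)) (hg'm : AEMeasurable g' (volume.restrict J))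
    (hbetween : ∀ x ∈ I, ∀ y ∈ J, y ∈ uIoo (f x) (g x) ↔ x ∈ uIoo (f' y) (g' y)) :
    ∫⁻ x in I, ENNReal.ofReal |f x - g x| = ∫⁻ y in J, ENNReal.ofReal |f' y - g' y| := by
  rw [← volume_regionBetween_inf_sup_eq_lintegral hfm hgm hI.measurableSet,
    ← volume_regionBetween_inf_sup_eq_lintegral hf'm hg'm hJ.measurableSet,
    ← swap_preimage_regionBetween_inf_sup hI hJ hf hg hf' hg' hbetween]
  exact Measure.measurePreserving_swap.measure_preimage_equiv (f := MeasurableEquiv.prodComm) _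

theorem stmt12_general (I J : Set ℝ) (hI : I.OrdConnected) (hJ : J.OrdConnected)
    (f g f' g' : ℝ → ℝ)
    (hfb : Set.BijOn f I J) (hgb : Set.BijOn g I J)
    (hmono : (StrictMonoOn f I ∧ StrictMonoOn g I) ∨ (StrictAntiOn f I ∧ StrictAntiOn g I))
    (hf' : Set.InvOn f' f I J) (hg' : Set.InvOn g' g I J) :
    ∫⁻ x in I, ENNReal.ofReal |f x - g x|
      = ∫⁻ y in J, ENNReal.ofReal |f' y - g' y| := by
  have hf'maps : MapsTo f' J I := (hfb.symm hf'.symm).mapsTo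
  have hg'maps : MapsTo g' J I := (hgb.symm hg'.symm).mapsTo
  have hIm : MeasurableSet I := hI.measurableSet
  have hJm : MeasurableSet J := hJ.measurableSet
  rcases hmono with ⟨hfm, hgm⟩ | ⟨hfm, hgm⟩
  · exact lintegral_abs_sub_eq_of_mem_uIoo_iff hI hJ hfb.mapsTo hgb.mapsTo hf'maps hg'maps
      (aemeasurable_restrict_of_monotoneOn hIm hfm.monotoneOn)
      (aemeasurable_restrict_of_monotoneOn hIm hgm.monotoneOn)
      (aemeasurable_restrict_of_monotoneOn hJm (hf'.strictMonoOn hfm hf'maps).monotoneOn)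
      (aemeasurable_restrict_of_monotoneOn hJm (hg'.strictMonoOn hgm hg'maps).monotoneOn)
      fun x hx y hy => hfm.mem_uIoo_iff_of_invOn hgm hf' hg' hf'maps hg'maps hx hy
  · exact lintegral_abs_sub_eq_of_mem_uIoo_iff hI hJ hfb.mapsTo hgb.mapsTo hf'maps hg'maps
      (aemeasurable_restrict_of_antitoneOn hIm hfm.antitoneOn)
      (aemeasurable_restrict_of_antitoneOn hIm hgm.antitoneOn)
      (aemeasurable_restrict_of_antitoneOn hJm (hf'.strictAntiOn hfm hf'maps).antitoneOn)
      (aemeasurable_restrict_of_antitoneOn hJm (hg'.strictAntiOn hgm hg'maps).antitoneOn)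
      fun x hx y hy => hfm.mem_uIoo_iff_of_invOn hgm hf' hg' hf'maps hg'maps hx hy

theorem stmt12 (I J : Set ℝ) (hI : I.OrdConnected) (hJ : J.OrdConnected)
    (f g f' g' : ℝ → ℝ)
    (hfc : ContinuousOn f I) (hgc : ContinuousOn g I)
    (hfb : Set.BijOn f I J) (hgb : Set.BijOn g I J)
    (hmono : (StrictMonoOn f I ∧ StrictMonoOn g I) ∨ (StrictAntiOn f I ∧ StrictAntiOn g I))
    (hf' : Set.InvOn f' f I J) (hg' : Set.InvOn g' g I J) :
    ∫⁻ x in I, ENNReal.ofReal |f x - g x|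
      = ∫⁻ y in J, ENNReal.ofReal |f' y - g' y| :=
  stmt12_general I J hI hJ f g f' g' hfb hgb hmono hf' hg'
end

section
/- Let g be a nonnegative, nondecreasing, continuous, convex function on [a,b] with g(a) = 0, right derivative 0 at a, and ∫_a^b g dμ ≤ 1. Let g' be any nondecreasing function with g'(a) = 0, g'(b) = g'_l(b), and g'_l(x) ≤ g'(x) ≤ g'_r(x) on (a,b). Then g(b) ≤ √(2·g'(b)). -/
theorem stmt15 (a b : ℝ) (hab : a < b) (g : ℝ → ℝ)
    (hnn : ∀ x ∈ Set.Icc a b, 0 ≤ g x)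
    (hmono : MonotoneOn g (Set.Icc a b))
    (hcont : ContinuousOn g (Set.Icc a b))
    (hconv : ConvexOn ℝ (Set.Icc a b) g)
    (hga : g a = 0)
    (hra : HasDerivWithinAt g 0 (Set.Ioi a) a)
    (hint : ∫ x in a..b, g x ≤ 1)
    (gl gr g' : ℝ → ℝ)
    (hgl : ∀ x ∈ Set.Ioo a b, HasDerivWithinAt g (gl x) (Set.Iio x) x)
    (hgr : ∀ x ∈ Set.Ioo a b, HasDerivWithinAt g (gr x) (Set.Ioi x) x)
    (hg'mono : MonotoneOn g' (Set.Icc a b))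
    (hg'a : g' a = 0)
    (hg'b : HasDerivWithinAt g (g' b) (Set.Iic b) b)
    (hsq : ∀ x ∈ Set.Ioo a b, gl x ≤ g' x ∧ g' x ≤ gr x) :
    g b ≤ Real.sqrt (2 * g' b) := by
  have hD : HasDerivWithinAt g (g' b) (Set.Iio b) b := hg'b.mono Set.Iio_subset_Iic_self
  have hgb0 : 0 ≤ g b := hnn b ⟨hab.le, le_rfl⟩
  -- tangent line inequality at b
  have key : ∀ x ∈ Set.Icc a b, g b - g' b * (b - x) ≤ g x := by
    intro x hx
    rcases eq_or_lt_of_le hx.2 with h | h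
    · subst h; simp
    · have hs := hconv.slope_le_of_hasDerivWithinAt_Iio hx ⟨hab.le, le_rfl⟩ h hD
      rw [slope_def_field] at hs
      have hbx : 0 < b - x := by linarith
      rw [div_le_iff₀ hbx] at hs
      linarith
  have hkeya : g b ≤ g' b * (b - a) := by
    have := key a ⟨le_rfl, hab.le⟩
    rw [hga] at this; linarith
  have hd0 : 0 ≤ g' b := by
    nlinarith
  rcases eq_or_lt_of_le hd0 with h0 | h0
  · have : g b = 0 := le_antisymm (by nlinarith) hgb0
    rw [this]
    exact Real.sqrt_nonneg _
  -- main case: g' b > 0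
  set c : ℝ := b - g b / g' b with hc
  have hac : a ≤ c := by
    have h1 : g b / g' b ≤ b - a := by
      rw [div_le_iff₀ h0]; nlinarith
    rw [hc]; linarith
  have hcb : c ≤ b := by
    rw [hc]
    have : 0 ≤ g b / g' b := div_nonneg hgb0 h0.le
    linarith
  have hsub : Set.uIcc c b ⊆ Set.Icc a b := by
    rw [Set.uIcc_of_le hcb]
    exact Set.Icc_subset_Icc hac le_rfl
  have hsub' : Set.uIcc a c ⊆ Set.Icc a b := by
    rw [Set.uIcc_of_le hac]
    exact Set.Icc_subset_Icc le_rfl hcb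
  have hint1 : IntervalIntegrable g MeasureTheory.volume c b :=
    (hcont.mono hsub).intervalIntegrable
  have hint2 : IntervalIntegrable g MeasureTheory.volume a c :=
    (hcont.mono hsub').intervalIntegrable
  have hsplit : ∫ x in a..b, g x = (∫ x in a..c, g x) + ∫ x in c..b, g x :=
    (intervalIntegral.integral_add_adjacent_intervals hint2 hint1).symm
  have hI1 : 0 ≤ ∫ x in a..c, g x := by
    apply intervalIntegral.integral_nonneg hac
    intro x hx
    exact hnn x (hsub' (Set.uIcc_of_le hac ▸ hx))
  have hlin : IntervalIntegrable (fun x => g b - g' b * (b - x)) MeasureTheory.volume c b := by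
    apply Continuous.intervalIntegrable
    continuity
  have hI2 : (∫ x in c..b, (g b - g' b * (b - x))) ≤ ∫ x in c..b, g x := by
    apply intervalIntegral.integral_mono_on hcb hlin hint1
    intro x hx
    exact key x ⟨hac.trans hx.1, hx.2⟩
  have hval : (∫ x in c..b, (g b - g' b * (b - x)))
      = (b - c) * g b - g' b * ((b - c) ^ 2 / 2) := by
    have e1 : ∀ x : ℝ, g b - g' b * (b - x) = (g b - g' b * b) + g' b * x := fun x => by ring
    simp_rw [e1]
    rw [intervalIntegral.integral_add intervalIntegrable_const
        (intervalIntegral.intervalIntegrable_id.const_mul _),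
      intervalIntegral.integral_const, intervalIntegral.integral_const_mul, integral_id,
      smul_eq_mul]
    ring
  have hbc : b - c = g b / g' b := by rw [hc]; ring
  have hval2 : (∫ x in c..b, (g b - g' b * (b - x))) = g b ^ 2 / (2 * g' b) := by
    rw [hval, hbc]
    field_simp
    ring
  have hfinal : g b ^ 2 / (2 * g' b) ≤ 1 := by
    calc g b ^ 2 / (2 * g' b) = ∫ x in c..b, (g b - g' b * (b - x)) := hval2.symm
    _ ≤ ∫ x in c..b, g x := hI2
    _ ≤ ∫ x in a..b, g x := by rw [hsplit]; linarith
    _ ≤ 1 := hint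
  rw [Real.le_sqrt hgb0 (by positivity)]
  rw [div_le_one (by positivity)] at hfinal
  linarith
end

section
/- Let p = exp(φ) be a log-concave probability density on ℝ with φ concave, continuous on {φ > -∞} = ℝ, maximized at 0 with φ(0) = 0. Let t > 0 and a₁ < 0 < b₁ with φ(a₁) = φ(b₁) = -t. Then |a₁| + b₁ ≤ t/(1 - e^{-t}). -/
open MeasureTheory

lemma myExpInt (k a b : ℝ) (hk : k ≠ 0) :
    ∫ x in a..b, Real.exp (k * x) = (Real.exp (k * b) - Real.exp (k * a)) / k := by
  have hderiv : ∀ x ∈ Set.uIcc a b, HasDerivAt (fun y => Real.exp (k * y) / k)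
      (Real.exp (k * x)) x := by
    intro x _
    have h1 : HasDerivAt (fun y => k * y) k x := by
      simpa using (hasDerivAt_id x).const_mul k
    have h2 := (Real.hasDerivAt_exp (k * x)).comp x h1
    have h3 := h2.div_const k
    simpa [mul_div_assoc, mul_comm, mul_div_cancel_left₀ _ hk] using h3
  rw [intervalIntegral.integral_eq_sub_of_hasDerivAt hderiv
    ((Real.continuous_exp.comp (continuous_const.mul continuous_id)).intervalIntegrable a b)]
  ring

theorem stmt16 (φ : ℝ → ℝ)
    (hconc : ConcaveOn ℝ Set.univ φ) (hcont : Continuous φ)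
    (hmax : ∀ x, φ x ≤ φ 0) (h0 : φ 0 = 0)
    (hdens : ∫ x, Real.exp (φ x) = 1)
    (t : ℝ) (ht : 0 < t) (a₁ b₁ : ℝ) (ha : a₁ < 0) (hb : 0 < b₁)
    (hφa : φ a₁ = -t) (hφb : φ b₁ = -t) :
    |a₁| + b₁ ≤ t / (1 - Real.exp (-t)) := by
  have hc : 0 < 1 - Real.exp (-t) := by
    have := Real.exp_lt_one_iff.mpr (by linarith : -t < 0)
    linarith
  -- integrability
  have hInt : Integrable (fun x => Real.exp (φ x)) := by
    by_contra h
    rw [integral_undef h] at hdens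
    norm_num at hdens
  have hab : a₁ ≤ b₁ := le_of_lt (lt_trans ha hb)
  -- concavity lower bounds
  have hleft : ∀ x ∈ Set.Icc a₁ (0:ℝ), Real.exp ((-t / a₁) * x) ≤ Real.exp (φ x) := by
    intro x hx
    apply Real.exp_le_exp.mpr
    have hs0 : 0 ≤ x / a₁ := by
      have := div_nonneg (neg_nonneg.2 hx.2) (neg_nonneg.2 ha.le)
      rwa [neg_div_neg_eq] at this
    have hs1 : x / a₁ ≤ 1 := by
      rw [div_le_iff_of_neg ha]
      linarith [hx.1]
    have := hconc.2 (Set.mem_univ a₁) (Set.mem_univ (0:ℝ)) hs0 (by linarith : (0:ℝ) ≤ 1 - x / a₁)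
      (by ring)
    simp only [smul_eq_mul, mul_zero, add_zero, h0, hφa] at this
    have hxx : x / a₁ * a₁ = x := div_mul_cancel₀ x (ne_of_lt ha)
    rw [hxx] at this
    calc -t / a₁ * x = x / a₁ * (-t) := by ring
    _ ≤ φ x := by linarith
  have hright : ∀ x ∈ Set.Icc (0:ℝ) b₁, Real.exp ((-t / b₁) * x) ≤ Real.exp (φ x) := by
    intro x hx
    apply Real.exp_le_exp.mpr
    have hs0 : 0 ≤ x / b₁ := div_nonneg hx.1 (le_of_lt hb)
    have hs1 : x / b₁ ≤ 1 := by
      rw [div_le_one hb]; exact hx.2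
    have := hconc.2 (Set.mem_univ b₁) (Set.mem_univ (0:ℝ)) hs0 (by linarith : (0:ℝ) ≤ 1 - x / b₁)
      (by ring)
    simp only [smul_eq_mul, mul_zero, add_zero, h0, hφb] at this
    have hxx : x / b₁ * b₁ = x := div_mul_cancel₀ x (ne_of_gt hb)
    rw [hxx] at this
    calc -t / b₁ * x = x / b₁ * (-t) := by ring
    _ ≤ φ x := by linarith
  -- interval integrals
  have hIleft : ∫ x in a₁..(0:ℝ), Real.exp ((-t / a₁) * x) ≤ ∫ x in a₁..(0:ℝ), Real.exp (φ x) := by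
    apply intervalIntegral.integral_mono_on (le_of_lt ha)
    · exact ((Real.continuous_exp.comp (continuous_const.mul continuous_id)).intervalIntegrable _ _)
    · exact ((Real.continuous_exp.comp hcont).intervalIntegrable _ _)
    · exact hleft
  have hIright : ∫ x in (0:ℝ)..b₁, Real.exp ((-t / b₁) * x) ≤ ∫ x in (0:ℝ)..b₁, Real.exp (φ x) := by
    apply intervalIntegral.integral_mono_on (le_of_lt hb)
    · exact ((Real.continuous_exp.comp (continuous_const.mul continuous_id)).intervalIntegrable _ _)
    · exact ((Real.continuous_exp.comp hcont).intervalIntegrable _ _)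
    · exact hright
  have hka : (-t / a₁) ≠ 0 := div_ne_zero (by linarith) (ne_of_lt ha)
  have hkb : (-t / b₁) ≠ 0 := div_ne_zero (by linarith) (ne_of_gt hb)
  have hvl : ∫ x in a₁..(0:ℝ), Real.exp ((-t / a₁) * x)
      = (-a₁) * (1 - Real.exp (-t)) / t := by
    have ht' : t ≠ 0 := ne_of_gt ht
    have ha' : a₁ ≠ 0 := ne_of_lt ha
    rw [myExpInt _ _ _ hka, div_mul_cancel₀ (-t) ha', mul_zero, Real.exp_zero,
      div_div_eq_mul_div]
    ring
  have hvr : ∫ x in (0:ℝ)..b₁, Real.exp ((-t / b₁) * x)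
      = b₁ * (1 - Real.exp (-t)) / t := by
    have ht' : t ≠ 0 := ne_of_gt ht
    have hb' : b₁ ≠ 0 := ne_of_gt hb
    rw [myExpInt _ _ _ hkb, div_mul_cancel₀ (-t) hb', mul_zero, Real.exp_zero,
      div_div_eq_mul_div]
    ring
  -- combine: ∫ a₁..b₁ = ∫ a₁..0 + ∫ 0..b₁
  have hsplit : ∫ x in a₁..b₁, Real.exp (φ x)
      = (∫ x in a₁..(0:ℝ), Real.exp (φ x)) + ∫ x in (0:ℝ)..b₁, Real.exp (φ x) := by
    exact (intervalIntegral.integral_add_adjacent_intervals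
      ((Real.continuous_exp.comp hcont).intervalIntegrable _ _)
      ((Real.continuous_exp.comp hcont).intervalIntegrable _ _)).symm
  -- interval integral ≤ total
  have htot : ∫ x in a₁..b₁, Real.exp (φ x) ≤ 1 := by
    rw [intervalIntegral.integral_of_le hab, ← hdens]
    apply setIntegral_le_integral hInt
    filter_upwards with x using le_of_lt (Real.exp_pos _)
  have hkey : ((-a₁) + b₁) * (1 - Real.exp (-t)) / t ≤ 1 := by
    have : (-a₁) * (1 - Real.exp (-t)) / t + b₁ * (1 - Real.exp (-t)) / t ≤ 1 := by
      rw [← hvl, ← hvr]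
      calc _ ≤ (∫ x in a₁..(0:ℝ), Real.exp (φ x)) + ∫ x in (0:ℝ)..b₁, Real.exp (φ x) :=
        add_le_add hIleft hIright
      _ = ∫ x in a₁..b₁, Real.exp (φ x) := hsplit.symm
      _ ≤ 1 := htot
    rw [show ((-a₁) + b₁) * (1 - Real.exp (-t)) / t
      = (-a₁) * (1 - Real.exp (-t)) / t + b₁ * (1 - Real.exp (-t)) / t from by ring]
    exact this
  have habs : |a₁| = -a₁ := abs_of_neg ha
  rw [habs, le_div_iff₀ hc]
  rw [div_le_one ht] at hkey
  linarith
end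

section
/- Let p = exp(φ) and p̄ = exp(φ̄) be log-concave densities on ℝ, where φ̄ is piecewise affine: there is a partition of ℝ into at most D+1 intervals on each of which φ̄ is either affine or identically -∞. Then the set {x : p(x) > p̄(x)} is a union of at most D+1 intervals, and the set {x : p(x) < p̄(x)} is a union of at most D+2 intervals. -/
/-!
Since `log p - (c x + d)` is concave, the sets `{exp (c x + d) < p}` and `{exp (c x + d) ≤ p}`
are intervals for a log-concave `p`. So `{q < p}` and `{q ≤ p}` meet each of the `D + 1` pieces
of `q` in an interval. The complement `{p < q}` of the `D + 1` intervals making up `{q ≤ p}` is a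
union of `D + 2` intervals: in a linear order, the complement of `n` intervals consists of the
points above all of them together with, for each `i`, the points whose first interval to the
right is the `i`-th.
-/

open Real Set

theorem Set.exists_ordConnected_compl_iUnion {α : Type*} [LinearOrder α] {n : ℕ}
    {A : Fin n → Set α} (hA : ∀ i, (A i).OrdConnected) :
    ∃ I : Fin (n + 1) → Set α, (∀ i, (I i).OrdConnected) ∧ (⋃ i, A i)ᶜ = ⋃ i, I i := by
  set U := ⋃ i, A i
  let top : Set α := {x | x ∉ U ∧ ∀ w ∈ U, w ≤ x}
  let below (i : Fin n) : Set α :=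
    {x | x ∉ U ∧ (∃ a ∈ A i, x < a) ∧ ∀ w ∈ U, x < w → ∃ a ∈ A i, a ≤ w}
  have htop : top.OrdConnected := by
    refine ⟨fun x hx y hy z hz => ⟨fun hzU => ?_, fun w hw => (hx.2 w hw).trans hz.1⟩⟩
    exact hx.1 (le_antisymm hz.1 (hx.2 z hzU) ▸ hzU)
  have hbelow (i : Fin n) : (below i).OrdConnected := by
    refine ⟨fun x hx y hy z hz => ?_⟩
    obtain ⟨b, hb, hyb⟩ := hy.2.1
    refine ⟨fun hzU => ?_, ⟨b, hb, hz.2.trans_lt hyb⟩,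
      fun w hw hzw => hx.2.2 w hw (hz.1.trans_lt hzw)⟩
    obtain ⟨a, ha, haz⟩ := hx.2.2 z hzU (hz.1.lt_of_ne fun h => hx.1 (h ▸ hzU))
    exact hy.1 (mem_iUnion_of_mem i ((hA i).out ha hb ⟨haz.trans hz.2, hyb.le⟩))
  refine ⟨Fin.cons top below, Fin.cases htop hbelow, ?_⟩
  rw [iUnion_cons]
  refine Subset.antisymm (fun x hx => ?_)
    (union_subset (fun x hx => hx.1) (iUnion_subset fun i x hx => hx.1))
  by_cases hxtop : ∀ w ∈ U, w ≤ x
  · exact Or.inl ⟨hx, hxtop⟩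
  push Not at hxtop
  obtain ⟨w₀, hw₀, hxw₀⟩ := hxtop
  -- Upper sets of a linear order are totally ordered, so one `A i` comes first to the right of `x`.
  obtain ⟨i, -, hi⟩ := Finset.univ.exists_min_image (fun j => upperClosure (A j ∩ Ioi x))
    (Finset.univ_nonempty_iff.2 ⟨(mem_iUnion.1 hw₀).choose⟩)
  have hfirst : ∀ w ∈ U, x < w → ∃ a ∈ A i, x < a ∧ a ≤ w := by
    intro w hw hxw
    obtain ⟨j, hj⟩ := mem_iUnion.1 hw
    obtain ⟨a, ⟨ha, hxa⟩, haw⟩ := mem_upperClosure.1 <|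
      UpperSet.coe_subset_coe.2 (hi j (Finset.mem_univ j)) (subset_upperClosure ⟨hj, hxw⟩)
    exact ⟨a, ha, hxa, haw⟩
  obtain ⟨a, ha, hxa, -⟩ := hfirst w₀ hw₀ hxw₀
  refine Or.inr (mem_iUnion_of_mem i ⟨hx, ⟨a, ha, hxa⟩, fun w hw hxw => ?_⟩)
  obtain ⟨a', ha', -, ha'w⟩ := hfirst w hw hxw
  exact ⟨a', ha', ha'w⟩

theorem ConcaveOn.sub_affine {s : Set ℝ} {f : ℝ → ℝ} (hf : ConcaveOn ℝ s f) (c d : ℝ) :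
    ConcaveOn ℝ s fun x => f x - (c * x + d) :=
  hf.sub (((LinearMap.mulLeft ℝ c).convexOn hf.1).add_const d)

section LogConcave

variable {p : ℝ → ℝ}

theorem ordConnected_setOf_exp_affine_lt
    (hpconc : ConcaveOn ℝ {x | 0 < p x} fun x => log (p x)) (c d : ℝ) :
    {x | exp (c * x + d) < p x}.OrdConnected := by
  suffices {x | exp (c * x + d) < p x} = {x ∈ {x | 0 < p x} | 0 < log (p x) - (c * x + d)} by
    rw [this]
    exact ((hpconc.sub_affine c d).convex_gt 0).ordConnected
  refine Set.ext fun x =>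
    ⟨fun h => ?_, fun ⟨hpx, h⟩ => (lt_log_iff_exp_lt hpx).1 (sub_pos.1 h)⟩
  have hpx : 0 < p x := (exp_pos _).trans h
  exact ⟨hpx, sub_pos.2 ((lt_log_iff_exp_lt hpx).2 h)⟩

theorem ordConnected_setOf_exp_affine_le
    (hpconc : ConcaveOn ℝ {x | 0 < p x} fun x => log (p x)) (c d : ℝ) :
    {x | exp (c * x + d) ≤ p x}.OrdConnected := by
  suffices {x | exp (c * x + d) ≤ p x} = {x ∈ {x | 0 < p x} | 0 ≤ log (p x) - (c * x + d)} by
    rw [this]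
    exact ((hpconc.sub_affine c d).convex_ge 0).ordConnected
  refine Set.ext fun x =>
    ⟨fun h => ?_, fun ⟨hpx, h⟩ => (le_log_iff_exp_le hpx).1 (sub_nonneg.1 h)⟩
  have hpx : 0 < p x := (exp_pos _).trans_le h
  exact ⟨hpx, sub_nonneg.2 ((le_log_iff_exp_le hpx).2 h)⟩

variable {q : ℝ → ℝ} {J : Set ℝ}

theorem ordConnected_inter_setOf_lt
    (hpconc : ConcaveOn ℝ {x | 0 < p x} fun x => log (p x)) (hJ : J.OrdConnected)
    (hq : (∀ x ∈ J, q x = 0) ∨ ∃ c d : ℝ, ∀ x ∈ J, q x = exp (c * x + d)) :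
    (J ∩ {x | q x < p x}).OrdConnected := by
  rcases hq with hq | ⟨c, d, hq⟩
  · convert hJ.inter hpconc.1.ordConnected using 1
    exact Set.ext fun x => and_congr_right fun hx => by simp only [mem_ofPred_eq, hq x hx]
  · convert hJ.inter (ordConnected_setOf_exp_affine_lt hpconc c d) using 1
    exact Set.ext fun x => and_congr_right fun hx => by simp only [mem_ofPred_eq, hq x hx]

theorem ordConnected_inter_setOf_le (hp0 : ∀ x, 0 ≤ p x)
    (hpconc : ConcaveOn ℝ {x | 0 < p x} fun x => log (p x)) (hJ : J.OrdConnected)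
    (hq : (∀ x ∈ J, q x = 0) ∨ ∃ c d : ℝ, ∀ x ∈ J, q x = exp (c * x + d)) :
    (J ∩ {x | q x ≤ p x}).OrdConnected := by
  rcases hq with hq | ⟨c, d, hq⟩
  · rwa [inter_eq_left.2 fun x hx => by simp only [mem_ofPred_eq, hq x hx, hp0 x]]
  · convert hJ.inter (ordConnected_setOf_exp_affine_le hpconc c d) using 1
    exact Set.ext fun x => and_congr_right fun hx => by simp only [mem_ofPred_eq, hq x hx]

end LogConcave

theorem stmt19_general (D : ℕ) (p q : ℝ → ℝ)
    (hp0 : ∀ x, 0 ≤ p x)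
    (hpconc : ConcaveOn ℝ {x | 0 < p x} (fun x => Real.log (p x)))
    (hpart : ∃ J : Fin (D + 1) → Set ℝ,
      (∀ i, (J i).OrdConnected) ∧ (⋃ i, J i) = Set.univ ∧
      Pairwise (Function.onFun Disjoint J) ∧
      ∀ i, (∀ x ∈ J i, q x = 0) ∨ ∃ c d : ℝ, ∀ x ∈ J i, q x = Real.exp (c * x + d)) :
    (∃ I : Fin (D + 1) → Set ℝ, (∀ i, (I i).OrdConnected) ∧
      {x | q x < p x} = ⋃ i, I i) ∧
    (∃ I : Fin (D + 2) → Set ℝ, (∀ i, (I i).OrdConnected) ∧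
      {x | p x < q x} = ⋃ i, I i) := by
  obtain ⟨J, hJ, hJcov, -, hJq⟩ := hpart
  refine ⟨⟨fun i => J i ∩ {x | q x < p x},
    fun i => ordConnected_inter_setOf_lt hpconc (hJ i) (hJq i), ?_⟩, ?_⟩
  · rw [← iUnion_inter, hJcov, univ_inter]
  · obtain ⟨I, hI, hIeq⟩ := exists_ordConnected_compl_iUnion
      fun i => ordConnected_inter_setOf_le hp0 hpconc (hJ i) (hJq i)
    refine ⟨I, hI, ?_⟩
    rw [← hIeq, ← iUnion_inter, hJcov, univ_inter, compl_ofPred]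
    simp only [not_le]

theorem stmt19 (D : ℕ) (p q : ℝ → ℝ)
    (hp0 : ∀ x, 0 ≤ p x) (hq0 : ∀ x, 0 ≤ q x)
    (hpdens : ∫ x, p x = 1) (hqdens : ∫ x, q x = 1)
    (hpopen : IsOpen {x | 0 < p x}) (hpord : ({x | 0 < p x}).OrdConnected)
    (hpconc : ConcaveOn ℝ {x | 0 < p x} (fun x => Real.log (p x)))
    (hpcont : ContinuousOn (fun x => Real.log (p x)) {x | 0 < p x})
    (hqopen : IsOpen {x | 0 < q x}) (hqord : ({x | 0 < q x}).OrdConnected)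
    (hqconc : ConcaveOn ℝ {x | 0 < q x} (fun x => Real.log (q x)))
    (hqcont : ContinuousOn (fun x => Real.log (q x)) {x | 0 < q x})
    (hpart : ∃ J : Fin (D + 1) → Set ℝ,
      (∀ i, (J i).OrdConnected) ∧ (⋃ i, J i) = Set.univ ∧
      Pairwise (Function.onFun Disjoint J) ∧
      ∀ i, (∀ x ∈ J i, q x = 0) ∨ ∃ c d : ℝ, ∀ x ∈ J i, q x = Real.exp (c * x + d)) :
    (∃ I : Fin (D + 1) → Set ℝ, (∀ i, (I i).OrdConnected) ∧
      {x | q x < p x} = ⋃ i, I i) ∧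
    (∃ I : Fin (D + 2) → Set ℝ, (∀ i, (I i).OrdConnected) ∧
      {x | p x < q x} = ⋃ i, I i) :=
  stmt19_general D p q hp0 hpconc hpart
end
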